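/- Let η ∈ {2, 3, …} ∪ {∞} and κ ∈ {0, 1, 2, …} ∪ {∞}, and let S_λ be a weighted shift on the directed tree 𝒯_{η,κ} with nonzero weights λ = {λ_v}_{v ∈ V_{η,κ}°}. Suppose there exists a sequence {μ_i}_{i ∈ J_η} of Borel probability measures on ℝ₊ satisfying the moment condition ∫₀^∞ s^n dμ_i(s) = |λ_{i,2} λ_{i,3} ⋯ λ_{i,n+1}|² for all positive integers n and all i ∈ J_η, and satisfying one of the conditions (i), (ii), (iii) below. Then for every positive integer n, the power S_λ^n is densely defined if and only if Σ_{i ∈ J_η} |λ_{i,1}|² ∫₀^∞ s^{n−1} dμ_i(s) < ∞. Conditions: (i) κ = 0 and Σ_{i ∈ J_η} |λ_{i,1}|² ∫₀^∞ (1/s) dμ_i(s) ≤ 1; (ii) 0 < κ < ∞, Σ_{i ∈ J_η} |λ_{i,1}|² ∫₀^∞ (1/s) dμ_i(s) = 1, |λ_0 λ_{−1} ⋯ λ_{−(l−1)}|² Σ_{i ∈ J_η} |λ_{i,1}|² ∫₀^∞ s^{−(l+1)} dμ_i(s) = 1 for every l ∈ J_{κ−1}, and |λ_0 λ_{−1}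 ⋯ λ_{−(κ−1)}|² Σ_{i ∈ J_η} |λ_{i,1}|² ∫₀^∞ s^{−(κ+1)} dμ_i(s) ≤ 1; (iii) κ = ∞, Σ_{i ∈ J_η} |λ_{i,1}|² ∫₀^∞ (1/s) dμ_i(s) = 1 and |λ_0 λ_{−1} ⋯ λ_{−(l−1)}|² Σ_{i ∈ J_η} |λ_{i,1}|² ∫₀^∞ s^{−(l+1)} dμ_i(s) = 1 for every positive integer l. -/

import Mathlib

open MeasureTheory ENNReal NNReal

/-- `E` is the edge relation of a directed tree: every vertex has at most one parent,
there are no (directed) circuits, and the underlying undirected graph is connected. -/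
structure IsDirectedTree {V : Type*} (E : V → V → Prop) : Prop where
  nonempty : Nonempty V
  parent_unique : ∀ ⦃u u' v : V⦄, E u v → E u' v → u = u'
  no_circuit : ∀ (k : ℕ) (c : ℕ → V), 1 ≤ k → (∀ i < k, E (c i) (c (i + 1))) → c 0 ≠ c k
  connected : ∀ u v : V, Relation.ReflTransGen (fun a b : V => E a b ∨ E b a) u v

/-- `v ∈ V°`, i.e. `v` has a parent. -/
def HasParent {V : Type*} (E : V → V → Prop) (v : V) : Prop := ∃ u, E u v

/-- `u` is a branching vertex: it has at least two children. -/
def IsBranching {V : Type*} (E : V → V → Prop) (u : V) : Prop :=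
  ∃ v w : V, E u v ∧ E u w ∧ v ≠ w

open scoped Classical in
/-- The formal action `Λ_𝒯` of the weighted shift with weights `lam` (only the values of
`lam` on `V°` matter): `(Λ f)(v) = λ_v f(par v)` for `v ∈ V°` and `0` otherwise. -/
noncomputable def shiftFun {V : Type*} (E : V → V → Prop) (lam : V → ℂ) (f : V → ℂ) :
    V → ℂ :=
  fun v => if h : ∃ u, E u v then lam v * f (Classical.choose h) else 0

/-- The (natural) domain of the `n`-th power of the weighted shift `S_λ`, described as a set
of functions: `f ∈ D(S_λ^n)` iff `Λ^k f ∈ ℓ²(V)` for all `k ≤ n`. This agrees with the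
recursive definition `D(S^0) = ℓ²(V)`, `D(S^{n+1}) = {f ∈ D(S^n) : S^n f ∈ D(S)}`. -/
noncomputable def domPow {V : Type*} (E : V → V → Prop) (lam : V → ℂ) (n : ℕ) :
    Set (V → ℂ) :=
  {f | ∀ k ≤ n, Memℓp ((shiftFun E lam)^[k] f) 2}

/-- `S_λ^n` is densely defined, i.e. `D(S_λ^n)` is dense in `ℓ²(V)`. -/
noncomputable def DenselyDefinedPow {V : Type*} (E : V → V → Prop) (lam : V → ℂ)
    (n : ℕ) : Prop :=
  Dense {f : lp (fun _ : V => ℂ) 2 | (⇑f : V → ℂ) ∈ domPow E lam n}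

/-- `e_u`, the characteristic function of `{u}`. -/
noncomputable def eFun {V : Type*} (u : V) : V → ℂ := ({u} : Set V).indicator 1

/-- The trunk vertices of `𝒯_{η,κ}`: `⟨m, _⟩` with `m ∈ {0,…,κ}` represents the vertex
`-m` (so `⟨0, _⟩` is the branching vertex `0`). -/
abbrev TrunkV (κ : ℕ∞) : Type := {m : ℕ // (m : ℕ∞) ≤ κ}

/-- The branch vertices `(i,j)` of `𝒯_{η,κ}`, with `i ∈ J_η` and `j ∈ ℕ` positive. -/
abbrev BranchV (η : ℕ∞) : Type := {p : ℕ × ℕ // 1 ≤ p.1 ∧ (p.1 : ℕ∞) ≤ η ∧ 1 ≤ p.2}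

/-- The vertex set `V_{η,κ}` of the directed tree `𝒯_{η,κ}`. -/
abbrev TreeV (η κ : ℕ∞) : Type := TrunkV κ ⊕ BranchV η

/-- The edge relation of `𝒯_{η,κ}`: edges `(-k) → (-k+1)` for `k ∈ J_κ`,
`0 → (i,1)` for `i ∈ J_η`, and `(i,j) → (i,j+1)`. -/
def TreeE (η κ : ℕ∞) : TreeV η κ → TreeV η κ → Prop
  | Sum.inl a, Sum.inl b => a.1 = b.1 + 1
  | Sum.inl a, Sum.inr p => a.1 = 0 ∧ p.1.2 = 1
  | Sum.inr p, Sum.inr q => p.1.1 = q.1.1 ∧ q.1.2 = p.1.2 + 1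
  | Sum.inr _, Sum.inl _ => False

/-- `λ_{i,j}`, the weight attached to the branch vertex `(i,j)` (junk value `0` for
invalid indices). -/
def lamB {η κ : ℕ∞} (lam : TreeV η κ → ℂ) (i j : ℕ) : ℂ :=
  if h : 1 ≤ i ∧ (i : ℕ∞) ≤ η ∧ 1 ≤ j then lam (Sum.inr ⟨(i, j), h⟩) else 0

/-- `λ_{-l}`, the weight attached to the trunk vertex `-l` (junk value `0` for
invalid indices); in particular `lamT lam 0 = λ_0`. -/
def lamT {η κ : ℕ∞} (lam : TreeV η κ → ℂ) (l : ℕ) : ℂ :=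
  if h : (l : ℕ∞) ≤ κ then lam (Sum.inl ⟨l, h⟩) else 0

/-- The sum `Σ_{i ∈ J_η} |λ_{i,1}|² ∫₀^∞ g(s) dμ_i(s)`, with values in `[0,∞]`. -/
noncomputable def branchSum (η κ : ℕ∞) (lam : TreeV η κ → ℂ) (μ : ℕ → Measure ℝ≥0)
    (g : ℝ≥0 → ℝ≥0∞) : ℝ≥0∞ :=
  ∑' i : {i : ℕ // 1 ≤ i ∧ (i : ℕ∞) ≤ η},
    (‖lamB lam (i : ℕ) 1‖₊ : ℝ≥0∞) ^ 2 * ∫⁻ s, g s ∂(μ (i : ℕ))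

/-- The moment condition `∫₀^∞ s^n dμ_i(s) = |λ_{i,2} ⋯ λ_{i,n+1}|²` for all `n ≥ 1`
and all `i ∈ J_η`. -/
def MomentCond (η κ : ℕ∞) (lam : TreeV η κ → ℂ) (μ : ℕ → Measure ℝ≥0) : Prop :=
  ∀ n : ℕ, 1 ≤ n → ∀ i : ℕ, 1 ≤ i → (i : ℕ∞) ≤ η →
    ∫⁻ s, (s : ℝ≥0∞) ^ n ∂(μ i) =
      (‖∏ j ∈ Finset.Icc 2 (n + 1), lamB lam i j‖₊ : ℝ≥0∞) ^ 2

/-- Condition (i): `κ = 0` and `Σ_{i ∈ J_η} |λ_{i,1}|² ∫₀^∞ (1/s) dμ_i(s) ≤ 1`. -/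
def CondI (η κ : ℕ∞) (lam : TreeV η κ → ℂ) (μ : ℕ → Measure ℝ≥0) : Prop :=
  κ = 0 ∧ branchSum η κ lam μ (fun s => ((s : ℝ≥0∞))⁻¹) ≤ 1

/-- Condition (ii): `0 < κ < ∞`, `Σ_{i ∈ J_η} |λ_{i,1}|² ∫₀^∞ (1/s) dμ_i(s) = 1`,
`|λ_0 ⋯ λ_{-(l-1)}|² Σ_{i ∈ J_η} |λ_{i,1}|² ∫₀^∞ s^{-(l+1)} dμ_i(s) = 1` for `l ∈ J_{κ-1}`,
and `|λ_0 ⋯ λ_{-(κ-1)}|² Σ_{i ∈ J_η} |λ_{i,1}|² ∫₀^∞ s^{-(κ+1)} dμ_i(s) ≤ 1`. -/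
def CondII (η κ : ℕ∞) (lam : TreeV η κ → ℂ) (μ : ℕ → Measure ℝ≥0) : Prop :=
  ∃ k : ℕ, 0 < k ∧ κ = (k : ℕ∞) ∧
    branchSum η κ lam μ (fun s => ((s : ℝ≥0∞))⁻¹) = 1 ∧
    (∀ l : ℕ, 1 ≤ l → l ≤ k - 1 →
      (‖∏ j ∈ Finset.range l, lamT lam j‖₊ : ℝ≥0∞) ^ 2 *
        branchSum η κ lam μ (fun s => ((s : ℝ≥0∞) ^ (l + 1))⁻¹) = 1) ∧
    (‖∏ j ∈ Finset.range k, lamT lam j‖₊ : ℝ≥0∞) ^ 2 *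
      branchSum η κ lam μ (fun s => ((s : ℝ≥0∞) ^ (k + 1))⁻¹) ≤ 1

/-- Condition (iii): `κ = ∞` and the equalities of (ii) hold for all `l ≥ 1`. -/
def CondIII (η κ : ℕ∞) (lam : TreeV η κ → ℂ) (μ : ℕ → Measure ℝ≥0) : Prop :=
  κ = ⊤ ∧ branchSum η κ lam μ (fun s => ((s : ℝ≥0∞))⁻¹) = 1 ∧
    ∀ l : ℕ, 1 ≤ l →
      (‖∏ j ∈ Finset.range l, lamT lam j‖₊ : ℝ≥0∞) ^ 2 *
        branchSum η κ lam μ (fun s => ((s : ℝ≥0∞) ^ (l + 1))⁻¹) = 1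

section Tree
variable {η κ : ℕ∞} {lam : TreeV η κ → ℂ} {f : TreeV η κ → ℂ}

lemma treeE_unique {u u' v : TreeV η κ} (h : TreeE η κ u v) (h' : TreeE η κ u' v) :
    u = u' := by
  rcases u with a | p <;> rcases u' with a' | p' <;> rcases v with b | q <;>
    simp only [TreeE] at h h'
  · exact congrArg Sum.inl (Subtype.ext (h.trans h'.symm))
  · exact congrArg Sum.inl (Subtype.ext (h.1.trans h'.1.symm))
  · exact absurd (h'.2.symm.trans h.2) (by have := p'.2.2.2; omega)
  · exact absurd (h.2.symm.trans h'.2) (by have := p.2.2.2; omega)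
  · refine congrArg Sum.inr (Subtype.ext (Prod.ext (h.1.trans h'.1.symm) ?_))
    omega

lemma shiftFun_edge {u v : TreeV η κ} (h : TreeE η κ u v) :
    shiftFun (TreeE η κ) lam f v = lam v * f u := by
  have hex : ∃ w, TreeE η κ w v := ⟨u, h⟩
  rw [shiftFun, dif_pos hex, treeE_unique (Classical.choose_spec hex) h]

lemma shiftFun_root {v : TreeV η κ} (h : ¬ ∃ u, TreeE η κ u v) :
    shiftFun (TreeE η κ) lam f v = 0 := dif_neg h

lemma noParent_top {m : ℕ} (hm : (m : ℕ∞) ≤ κ) (h1 : ¬ ((m+1 : ℕ) : ℕ∞) ≤ κ) :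
    ¬ ∃ u, TreeE η κ u (Sum.inl ⟨m, hm⟩ : TreeV η κ) := by
  rintro ⟨u, hu⟩
  rcases u with a | p
  · simp only [TreeE] at hu
    exact h1 (by simpa [← hu] using a.2)
  · exact hu

/-- value of `Λ^[k] f` at a trunk vertex. -/
lemma iter_inl (k : ℕ) (f : TreeV η κ → ℂ) (m : ℕ) (hm : (m : ℕ∞) ≤ κ) :
    (shiftFun (TreeE η κ) lam)^[k] f (Sum.inl ⟨m, hm⟩) =
      if h : ((m + k : ℕ) : ℕ∞) ≤ κ then
        (∏ t ∈ Finset.Ico m (m + k), lamT lam t) * f (Sum.inl ⟨m + k, h⟩)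
      else 0 := by
  induction k generalizing f m with
  | zero => simp [hm]
  | succ k ih =>
    rw [Function.iterate_succ_apply, ih]
    by_cases h1 : ((m + (k+1) : ℕ) : ℕ∞) ≤ κ
    · have hk : ((m + k : ℕ) : ℕ∞) ≤ κ :=
        le_trans (Nat.cast_le.2 (by omega)) h1
      have h1' : ((m + k + 1 : ℕ) : ℕ∞) ≤ κ := by rwa [show m+k+1 = m+(k+1) by omega]
      rw [dif_pos hk, dif_pos h1]
      have hedge : TreeE η κ (Sum.inl ⟨m + k + 1, h1'⟩) (Sum.inl ⟨m + k, hk⟩ : TreeV η κ) := by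
        simp [TreeE]
      rw [shiftFun_edge hedge]
      have hl : lam (Sum.inl ⟨m+k, hk⟩ : TreeV η κ) = lamT lam (m+k) := by
        rw [lamT, dif_pos hk]
      have hfe : f (Sum.inl ⟨m + k + 1, h1'⟩ : TreeV η κ) = f (Sum.inl ⟨m + (k+1), h1⟩) := rfl
      have hprod : ∏ t ∈ Finset.Ico m (m + (k+1)), lamT lam t
          = (∏ t ∈ Finset.Ico m (m + k), lamT lam t) * lamT lam (m + k) := by
        rw [show m + (k+1) = (m+k)+1 by omega]
        exact Finset.prod_Ico_succ_top (by omega) _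
      rw [hl, hfe, hprod]
      ring
    · rw [dif_neg h1]
      by_cases hk : ((m + k : ℕ) : ℕ∞) ≤ κ
      · rw [dif_pos hk,
          shiftFun_root (noParent_top hk (by rwa [show m+k+1 = m+(k+1) by omega])),
          mul_zero]
      · rw [dif_neg hk]

lemma edge_branch_one {i : ℕ} (h : 1 ≤ i ∧ (i : ℕ∞) ≤ η ∧ 1 ≤ 1) :
    TreeE η κ (Sum.inl ⟨0, zero_le⟩) (Sum.inr ⟨(i, 1), h⟩ : TreeV η κ) := by
  simp [TreeE]

lemma edge_branch_succ {i j : ℕ} (h : 1 ≤ i ∧ (i : ℕ∞) ≤ η ∧ 1 ≤ j + 1)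
    (h' : 1 ≤ i ∧ (i : ℕ∞) ≤ η ∧ 1 ≤ j) :
    TreeE η κ (Sum.inr ⟨(i, j), h'⟩) (Sum.inr ⟨(i, j + 1), h⟩ : TreeV η κ) := by
  simp [TreeE]

/-- value of `Λ^[k] f` at a branch vertex, going up within the branch (`k < j`). -/
lemma iter_inr_lt (k : ℕ) (f : TreeV η κ → ℂ) (i j : ℕ)
    (h : 1 ≤ i ∧ (i : ℕ∞) ≤ η ∧ 1 ≤ j) (hk : k < j) :
    (shiftFun (TreeE η κ) lam)^[k] f (Sum.inr ⟨(i, j), h⟩) =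
      (∏ t ∈ Finset.Ico (j - k + 1) (j + 1), lamB lam i t) *
        f (Sum.inr ⟨(i, j - k), ⟨h.1, h.2.1, by omega⟩⟩) := by
  induction k generalizing f with
  | zero => simp
  | succ k ih =>
    rw [Function.iterate_succ_apply, ih _ (by omega)]
    have h1 : 1 ≤ i ∧ (i : ℕ∞) ≤ η ∧ 1 ≤ j - k := ⟨h.1, h.2.1, by omega⟩
    have h2 : 1 ≤ i ∧ (i : ℕ∞) ≤ η ∧ 1 ≤ j - k - 1 := ⟨h.1, h.2.1, by omega⟩
    have hedge : TreeE η κ (Sum.inr ⟨(i, j - k - 1), h2⟩)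
        (Sum.inr ⟨(i, j - k), h1⟩ : TreeV η κ) := by
      refine ⟨rfl, ?_⟩
      show j - k = j - k - 1 + 1
      omega
    rw [shiftFun_edge hedge]
    have hl : lam (Sum.inr ⟨(i, j - k), h1⟩ : TreeV η κ) = lamB lam i (j - k) := by
      rw [lamB, dif_pos h1]
    have hprod : ∏ t ∈ Finset.Ico (j - (k+1) + 1) (j + 1), lamB lam i t
        = lamB lam i (j - k) * ∏ t ∈ Finset.Ico (j - k + 1) (j + 1), lamB lam i t := by
      rw [show j - (k+1) + 1 = j - k by omega]
      exact Finset.prod_eq_prod_Ico_succ_bot (by omega) _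
    rw [hl, hprod]
    have hfe : f (Sum.inr ⟨(i, j - k - 1), h2⟩ : TreeV η κ)
        = f (Sum.inr ⟨(i, j - (k+1)), ⟨h.1, h.2.1, by omega⟩⟩) := rfl
    rw [hfe]; ring

/-- value of `Λ^[k] f` at a branch vertex for `j ≤ k`: goes through `0` into the trunk. -/
lemma iter_inr_ge (k : ℕ) (f : TreeV η κ → ℂ) (i j : ℕ)
    (h : 1 ≤ i ∧ (i : ℕ∞) ≤ η ∧ 1 ≤ j) (hk : j ≤ k) :
    (shiftFun (TreeE η κ) lam)^[k] f (Sum.inr ⟨(i, j), h⟩) =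
      (∏ t ∈ Finset.Ico 1 (j + 1), lamB lam i t) *
        (if h' : ((k - j : ℕ) : ℕ∞) ≤ κ then
          (∏ t ∈ Finset.Ico 0 (k - j), lamT lam t) * f (Sum.inl ⟨k - j, h'⟩)
        else 0) := by
  obtain ⟨d, rfl⟩ : ∃ d, k = j + d := ⟨k - j, by omega⟩
  simp only [Nat.add_sub_cancel_left]
  obtain ⟨j', rfl⟩ : ∃ j', j = j' + 1 := ⟨j - 1, by omega⟩
  rw [Function.iterate_add_apply]
  set g := (shiftFun (TreeE η κ) lam)^[d] f with hg
  rw [Function.iterate_succ_apply, iter_inr_lt j' _ i (j'+1) h (by omega)]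
  have h1 : 1 ≤ i ∧ (i : ℕ∞) ≤ η ∧ 1 ≤ (1:ℕ) := ⟨h.1, h.2.1, le_refl 1⟩
  have hv : (Sum.inr ⟨(i, j' + 1 - j'), ⟨h.1, h.2.1, by omega⟩⟩ : TreeV η κ)
      = Sum.inr ⟨(i, 1), h1⟩ :=
    congrArg Sum.inr (Subtype.ext (congrArg (Prod.mk i) (show j' + 1 - j' = 1 by omega)))
  rw [congrArg (shiftFun (TreeE η κ) lam g) hv, shiftFun_edge (edge_branch_one h1)]
  have hl : lam (Sum.inr ⟨(i, 1), h1⟩ : TreeV η κ) = lamB lam i 1 := by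
    rw [lamB, dif_pos h1]
  have hg0 : g (Sum.inl ⟨0, zero_le⟩ : TreeV η κ)
      = if h' : ((d : ℕ) : ℕ∞) ≤ κ then
          (∏ t ∈ Finset.Ico 0 d, lamT lam t) * f (Sum.inl ⟨d, h'⟩)
        else 0 := by
    rw [hg, iter_inl d f 0 (zero_le)]
    simp only [Nat.zero_add]
  have hprod : ∏ t ∈ Finset.Ico 1 (j' + 1 + 1), lamB lam i t
      = lamB lam i 1 * ∏ t ∈ Finset.Ico (j' + 1 - j' + 1) (j' + 1 + 1), lamB lam i t := by
    rw [show j' + 1 - j' + 1 = 2 by omega]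
    exact Finset.prod_eq_prod_Ico_succ_bot (by omega) _
  rw [hl, hg0, hprod]
  ring

end Tree

section L2
variable {α β : Type*}

lemma memℓp_two_iff (g : α → ℂ) :
    Memℓp g 2 ↔ (∑' v, ((‖g v‖₊ : ℝ≥0∞)) ^ 2) ≠ ⊤ := by
  have h2 : ((2 : ℝ≥0∞)).toReal = 2 := by norm_num
  rw [memℓp_gen_iff (by norm_num [h2] : 0 < ((2:ℝ≥0∞)).toReal)]
  have hcongr : (fun v => ‖g v‖ ^ ((2:ℝ≥0∞)).toReal) = fun v => ((‖g v‖₊ ^ 2 : ℝ≥0) : ℝ) := by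
    funext v
    rw [h2, Real.rpow_two]
    push_cast
    rfl
  rw [hcongr, NNReal.summable_coe, ← ENNReal.tsum_coe_ne_top_iff_summable]
  simp [ENNReal.coe_pow]

lemma tsum_sum_type (f : α ⊕ β → ℝ≥0∞) :
    ∑' x, f x = (∑' a, f (Sum.inl a)) + ∑' b, f (Sum.inr b) := by
  rw [← Summable.tsum_add_tsum_compl (s := Set.range (Sum.inl : α → α ⊕ β))
    ENNReal.summable ENNReal.summable, Set.isCompl_range_inl_range_inr.compl_eq]
  congr 1
  · rw [← (Equiv.ofInjective _ (Sum.inl_injective (α := α) (β := β))).tsum_eq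
      (fun x : Set.range (Sum.inl : α → α ⊕ β) => f x)]
    exact tsum_congr fun a => rfl
  · rw [← (Equiv.ofInjective _ (Sum.inr_injective (α := α) (β := β))).tsum_eq
      (fun x : Set.range (Sum.inr : β → α ⊕ β) => f x)]
    exact tsum_congr fun b => rfl

lemma tsum_nnnorm_sq_single_ne_top {g : α → ℂ} (v0 : α) (h : ∀ v, v ≠ v0 → g v = 0) :
    (∑' v, ((‖g v‖₊ : ℝ≥0∞)) ^ 2) ≠ ⊤ := by
  rw [tsum_eq_single v0 (fun b hb => by rw [h b hb]; simp)]
  exact (pow_ne_top coe_ne_top)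

end L2

section BS
variable {η κ : ℕ∞}

/-- `J_η` as a subtype. -/
abbrev JIdx (η : ℕ∞) : Type := {i : ℕ // 1 ≤ i ∧ (i : ℕ∞) ≤ η}

def branchEquiv (η : ℕ∞) : (JIdx η × {j : ℕ // 1 ≤ j}) ≃ BranchV η where
  toFun x := ⟨(x.1.1, x.2.1), x.1.2.1, x.1.2.2, x.2.2⟩
  invFun p := (⟨p.1.1, p.2.1, p.2.2.1⟩, ⟨p.1.2, p.2.2.2⟩)
  left_inv x := rfl
  right_inv p := rfl

lemma tsum_branchV (F : BranchV η → ℝ≥0∞) :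
    ∑' p : BranchV η, F p
      = ∑' i : JIdx η, ∑' j : {j : ℕ // 1 ≤ j}, F ⟨(i.1, j.1), i.2.1, i.2.2, j.2⟩ := by
  rw [← (branchEquiv η).tsum_eq F]
  exact ENNReal.tsum_prod (f := fun i j => F ((branchEquiv η) (i, j)))

lemma tsum_posnat_single (G : {j : ℕ // 1 ≤ j} → ℝ≥0∞) (d : ℕ) (hd : 1 ≤ d)
    (h : ∀ j : {j : ℕ // 1 ≤ j}, j.1 ≠ d → G j = 0) :
    ∑' j : {j : ℕ // 1 ≤ j}, G j = G ⟨d, hd⟩ :=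
  tsum_eq_single ⟨d, hd⟩ (fun b hb => h b (fun hbd => hb (Subtype.ext hbd)))

variable (lam : TreeV η κ → ℂ) (μ : ℕ → Measure ℝ≥0)

/-- moment identity including the trivial case `d = 1`. -/
lemma moment_Ico (hμ : ∀ i : ℕ, 1 ≤ i → (i : ℕ∞) ≤ η → IsProbabilityMeasure (μ i))
    (hmom : ∀ n : ℕ, 1 ≤ n → ∀ i : ℕ, 1 ≤ i → (i : ℕ∞) ≤ η →
      ∫⁻ s, (s : ℝ≥0∞) ^ n ∂(μ i) =
        (‖∏ j ∈ Finset.Icc 2 (n + 1), lamB (κ := κ) lam i j‖₊ : ℝ≥0∞) ^ 2)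
    (d : ℕ) (hd : 1 ≤ d) (i : ℕ) (hi1 : 1 ≤ i) (hiη : (i : ℕ∞) ≤ η) :
    ∫⁻ s, ((s : ℝ≥0∞)) ^ (d - 1) ∂(μ i) =
      (‖∏ j ∈ Finset.Ico 2 (d + 1), lamB (κ := κ) lam i j‖₊ : ℝ≥0∞) ^ 2 := by
  rcases Nat.eq_or_lt_of_le hd with h1 | h2
  · have : d = 1 := h1.symm
    subst this
    haveI := hμ i hi1 hiη
    simp
  · have hd2 : 1 ≤ d - 1 := by omega
    have := hmom (d - 1) hd2 i hi1 hiη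
    rw [show d - 1 + 1 = d by omega] at this
    rw [this, Finset.Ico_add_one_right_eq_Icc]

lemma branchSum_pow (hμ : ∀ i : ℕ, 1 ≤ i → (i : ℕ∞) ≤ η → IsProbabilityMeasure (μ i))
    (hmom : ∀ n : ℕ, 1 ≤ n → ∀ i : ℕ, 1 ≤ i → (i : ℕ∞) ≤ η →
      ∫⁻ s, (s : ℝ≥0∞) ^ n ∂(μ i) =
        (‖∏ j ∈ Finset.Icc 2 (n + 1), lamB (κ := κ) lam i j‖₊ : ℝ≥0∞) ^ 2)
    (d : ℕ) (hd : 1 ≤ d) :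
    branchSum η κ lam μ (fun s => ((s : ℝ≥0∞)) ^ (d - 1)) =
      ∑' i : JIdx η, ((‖∏ t ∈ Finset.Ico 1 (d + 1), lamB (κ := κ) lam i.1 t‖₊ : ℝ≥0∞)) ^ 2 := by
  rw [branchSum]
  refine tsum_congr fun i => ?_
  rw [moment_Ico lam μ hμ hmom d hd i.1 i.2.1 i.2.2]
  rw [Finset.prod_eq_prod_Ico_succ_bot (by omega : 1 < d + 1) (lamB lam i.1)]
  rw [nnnorm_mul, ENNReal.coe_mul, mul_pow]

lemma branchSum_le_add (g g1 g2 : ℝ≥0 → ℝ≥0∞) (hg1 : Measurable g1)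
    (hg : ∀ s, g s ≤ g1 s + g2 s) :
    branchSum η κ lam μ g ≤ branchSum η κ lam μ g1 + branchSum η κ lam μ g2 := by
  rw [branchSum, branchSum, branchSum, ← ENNReal.tsum_add]
  refine ENNReal.tsum_le_tsum fun i => ?_
  rw [← mul_add]
  refine mul_le_mul_right ?_ _
  calc ∫⁻ s, g s ∂(μ i.1) ≤ ∫⁻ s, (g1 s + g2 s) ∂(μ i.1) := lintegral_mono hg
    _ = _ := lintegral_add_left hg1 _

lemma branchSum_fin (hμ : ∀ i : ℕ, 1 ≤ i → (i : ℕ∞) ≤ η → IsProbabilityMeasure (μ i))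
    (n : ℕ) (hB : branchSum η κ lam μ (fun s => ((s : ℝ≥0∞)) ^ (n - 1)) ≠ ⊤)
    (hC : branchSum η κ lam μ (fun s => ((s : ℝ≥0∞))⁻¹) ≤ 1)
    (d : ℕ) (hdn : d ≤ n) :
    branchSum η κ lam μ (fun s => ((s : ℝ≥0∞)) ^ (d - 1)) ≠ ⊤ := by
  have hle : ∀ s : ℝ≥0, ((s : ℝ≥0∞)) ^ (d - 1) ≤ ((s : ℝ≥0∞))⁻¹ + ((s : ℝ≥0∞)) ^ (n - 1) := by
    intro s
    rcases le_total ((s : ℝ≥0∞)) 1 with hs | hs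
    · exact le_add_right (le_trans (pow_le_one' hs _) (ENNReal.one_le_inv.2 hs))
    · exact (pow_le_pow_right₀ hs (Nat.sub_le_sub_right hdn 1)).trans (self_le_add_left _ _)
  refine ne_top_of_le_ne_top ?_ (branchSum_le_add lam μ _ _ _ (by measurability) hle)
  exact ENNReal.add_ne_top.2 ⟨ne_top_of_le_ne_top one_ne_top hC, hB⟩

end BS

section Main
variable {η κ : ℕ∞} {lam : TreeV η κ → ℂ}

lemma psne {V : Type*} [DecidableEq V] {u v : V} (h : v ≠ u) (c : ℂ) :
    Pi.single (M := fun _ : V => ℂ) u c v = 0 := Pi.single_eq_of_ne (M := fun _ : V => ℂ) h c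

lemma psme {V : Type*} [DecidableEq V] (u : V) (c : ℂ) :
    Pi.single (M := fun _ : V => ℂ) u c u = c := Pi.single_eq_same (M := fun _ : V => ℂ) u c

lemma memℓp_iter_single (n : ℕ)
    (hA : ∀ d : ℕ, 1 ≤ d → d ≤ n →
      (∑' i : JIdx η, ((‖∏ t ∈ Finset.Ico 1 (d + 1), lamB (κ := κ) lam i.1 t‖₊ : ℝ≥0∞)) ^ 2) ≠ ⊤)
    (u : TreeV η κ) (c : ℂ) (k : ℕ) (hk : k ≤ n) :
    Memℓp ((shiftFun (TreeE η κ) lam)^[k] (Pi.single u c)) 2 := by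
  set g : TreeV η κ → ℂ := Pi.single u c with hgdef
  rw [memℓp_two_iff]
  rcases u with ⟨m0, hm0⟩ | ⟨⟨i0, j0⟩, h0⟩
  · -- trunk vertex
    by_cases hkm : k ≤ m0
    · -- single support at inl (m0 - k)
      refine tsum_nnnorm_sq_single_ne_top
        (Sum.inl ⟨m0 - k, le_trans (Nat.cast_le.2 (by omega)) hm0⟩) ?_
      rintro (⟨m, hm⟩ | ⟨⟨i, j⟩, hij⟩) hv
      · rw [iter_inl]
        split
        · next h' =>
          rcases eq_or_ne (m + k) m0 with he | hne
          · exact absurd (congrArg Sum.inl (Subtype.ext (by omega : m = m0 - k))) hv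
          · have hne2 : (Sum.inl ⟨m + k, h'⟩ : TreeV η κ) ≠ Sum.inl ⟨m0, hm0⟩ :=
              fun hc => hne (by injection hc with h; exact congrArg Subtype.val h)
            rw [hgdef, psne hne2 c, mul_zero]
        · rfl
      · rcases lt_or_ge k j with hj | hj
        · have hne2 : (Sum.inr ⟨(i, j - k), ⟨hij.1, hij.2.1, by omega⟩⟩ : TreeV η κ)
              ≠ Sum.inl ⟨m0, hm0⟩ := Sum.inr_ne_inl
          rw [iter_inr_lt k g i j hij hj, hgdef, psne hne2 c, mul_zero]
        · rw [iter_inr_ge k g i j hij hj]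
          split
          · next h' =>
            have hne2 : (Sum.inl ⟨k - j, h'⟩ : TreeV η κ) ≠ Sum.inl ⟨m0, hm0⟩ := by
              intro hc
              injection hc with h
              have : k - j = m0 := congrArg Subtype.val h
              omega
            rw [hgdef, psne hne2 c, mul_zero, mul_zero]
          · rw [mul_zero]
    · -- support on branch row d = k - m0
      push_neg at hkm
      set d := k - m0 with hd
      have hd1 : 1 ≤ d := by omega
      have hdn : d ≤ n := by omega
      rw [tsum_sum_type]
      have htrunk : (∑' a : TrunkV κ,
          ((‖(shiftFun (TreeE η κ) lam)^[k] g (Sum.inl a)‖₊ : ℝ≥0∞)) ^ 2) = 0 := by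
        refine (Summable.tsum_eq_zero_iff ENNReal.summable).2 fun ⟨m, hm⟩ => ?_
        rw [iter_inl]
        split
        · next h' =>
          have hne2 : (Sum.inl ⟨m + k, h'⟩ : TreeV η κ) ≠ Sum.inl ⟨m0, hm0⟩ := by
            intro hc
            injection hc with h
            have : m + k = m0 := congrArg Subtype.val h
            omega
          rw [hgdef, psne hne2 c, mul_zero]
          simp
        · simp
      rw [htrunk, zero_add, tsum_branchV]
      have hrow : ∀ i : JIdx η,
          (∑' j : {j : ℕ // 1 ≤ j}, ((‖(shiftFun (TreeE η κ) lam)^[k] g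
            (Sum.inr ⟨(i.1, j.1), i.2.1, i.2.2, j.2⟩)‖₊ : ℝ≥0∞)) ^ 2)
          = ((‖∏ t ∈ Finset.Ico 1 (d + 1), lamB (κ := κ) lam i.1 t‖₊ : ℝ≥0∞)) ^ 2 *
            (((‖∏ t ∈ Finset.Ico 0 m0, lamT (η := η) lam t‖₊ : ℝ≥0∞)) ^ 2 *
              ((‖c‖₊ : ℝ≥0∞)) ^ 2) := by
        intro i
        rw [tsum_posnat_single _ d hd1 ?_]
        · -- value at j = d
          have hij : 1 ≤ i.1 ∧ (i.1 : ℕ∞) ≤ η ∧ 1 ≤ d := ⟨i.2.1, i.2.2, hd1⟩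
          rw [iter_inr_ge k g i.1 d hij (by omega)]
          have hkd : ((k - d : ℕ) : ℕ∞) ≤ κ := by
            rw [show k - d = m0 by omega]; exact hm0
          rw [dif_pos hkd]
          have hgv : g (Sum.inl ⟨k - d, hkd⟩ : TreeV η κ) = c := by
            have hv : (Sum.inl ⟨k - d, hkd⟩ : TreeV η κ) = Sum.inl ⟨m0, hm0⟩ :=
              congrArg Sum.inl (Subtype.ext (show k - d = m0 by omega))
            rw [hgdef, hv, psme _ c]
          have hPT : (∏ t ∈ Finset.Ico 0 (k - d), lamT (η := η) lam t)
              = ∏ t ∈ Finset.Ico 0 m0, lamT (η := η) lam t := by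
            rw [show k - d = m0 by omega]
          rw [hgv, hPT]
          rw [nnnorm_mul, nnnorm_mul, ENNReal.coe_mul, ENNReal.coe_mul, mul_pow, mul_pow]
        · -- other rows vanish
          intro j hj
          rcases lt_or_ge k j.1 with hlt | hle
          · have hne2 : (Sum.inr ⟨(i.1, j.1 - k), ⟨i.2.1, i.2.2, by omega⟩⟩ : TreeV η κ)
                ≠ Sum.inl ⟨m0, hm0⟩ := Sum.inr_ne_inl
            rw [iter_inr_lt k g i.1 j.1 ⟨i.2.1, i.2.2, j.2⟩ hlt, hgdef,
              psne hne2 c, mul_zero]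
            simp
          · rw [iter_inr_ge k g i.1 j.1 ⟨i.2.1, i.2.2, j.2⟩ hle]
            split
            · next h' =>
              have hne2 : (Sum.inl ⟨k - j.1, h'⟩ : TreeV η κ) ≠ Sum.inl ⟨m0, hm0⟩ := by
                intro hc
                injection hc with h
                have h3 : k - j.1 = m0 := congrArg Subtype.val h
                exact hj (by omega)
              rw [hgdef, psne hne2 c, mul_zero, mul_zero]
              simp
            · rw [mul_zero]; simp
      rw [tsum_congr hrow, ENNReal.tsum_mul_right]
      exact ENNReal.mul_ne_top (hA d hd1 hdn)
        (ENNReal.mul_ne_top (pow_ne_top coe_ne_top) (pow_ne_top coe_ne_top))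
  · -- branch vertex
    refine tsum_nnnorm_sq_single_ne_top
      (Sum.inr ⟨(i0, j0 + k), h0.1, h0.2.1, by omega⟩) ?_
    rintro (⟨m, hm⟩ | ⟨⟨i, j⟩, hij⟩) hv
    · rw [iter_inl]
      split
      · next h' =>
        have hne2 : (Sum.inl ⟨m + k, h'⟩ : TreeV η κ) ≠ Sum.inr ⟨(i0, j0), h0⟩ :=
          Sum.inl_ne_inr
        rw [hgdef, psne hne2 c, mul_zero]
      · rfl
    · rcases lt_or_ge k j with hj | hj
      · rcases eq_or_ne ((i, j - k)) ((i0, j0)) with he | hne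
        · exfalso
          apply hv
          have h1 : i = i0 := congrArg Prod.fst he
          have h2 : j - k = j0 := congrArg Prod.snd he
          refine congrArg Sum.inr (Subtype.ext ?_)
          show (i, j) = (i0, j0 + k)
          rw [← h1, ← h2]
          exact congrArg (Prod.mk i) (by omega)
        · have hne2 : (Sum.inr ⟨(i, j - k), ⟨hij.1, hij.2.1, by omega⟩⟩ : TreeV η κ)
              ≠ Sum.inr ⟨(i0, j0), h0⟩ :=
            fun hc => hne (by injection hc with h; exact congrArg Subtype.val h)
          rw [iter_inr_lt k g i j hij hj, hgdef, psne hne2 c, mul_zero]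
      · rw [iter_inr_ge k g i j hij hj]
        split
        · next h' =>
          have hne2 : (Sum.inl ⟨k - j, h'⟩ : TreeV η κ) ≠ Sum.inr ⟨(i0, j0), h0⟩ :=
            Sum.inl_ne_inr
          rw [hgdef, psne hne2 c, mul_zero, mul_zero]
        · rw [mul_zero]

end Main

section Lin
variable {V : Type*} {E : V → V → Prop} {lam : V → ℂ}

lemma shiftFun_add' (f g : V → ℂ) :
    shiftFun E lam (f + g) = shiftFun E lam f + shiftFun E lam g := by
  funext v
  simp only [shiftFun, Pi.add_apply]
  split
  · ring
  · ring

lemma shiftFun_zero' : shiftFun E lam (0 : V → ℂ) = 0 := by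
  funext v
  simp only [shiftFun, Pi.zero_apply]
  split
  · ring
  · rfl

lemma iter_add' (k : ℕ) (f g : V → ℂ) :
    (shiftFun E lam)^[k] (f + g) = (shiftFun E lam)^[k] f + (shiftFun E lam)^[k] g := by
  induction k generalizing f g with
  | zero => rfl
  | succ k ih => rw [Function.iterate_succ_apply, shiftFun_add', ih,
      ← Function.iterate_succ_apply, ← Function.iterate_succ_apply]

lemma iter_zero' (k : ℕ) : (shiftFun E lam)^[k] (0 : V → ℂ) = 0 := by
  induction k with
  | zero => rfl
  | succ k ih => rw [Function.iterate_succ_apply, shiftFun_zero', ih]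

end Lin

section Obstruction
variable {η κ : ℕ∞} {lam : TreeV η κ → ℂ}

set_option maxHeartbeats 1000000 in
lemma zero_coord_of_mem (n : ℕ) (hn : 1 ≤ n)
    (hdiv : (∑' i : JIdx η,
      ((‖∏ t ∈ Finset.Ico 1 (n + 1), lamB (κ := κ) lam i.1 t‖₊ : ℝ≥0∞)) ^ 2) = ⊤)
    (f : TreeV η κ → ℂ) (hf : Memℓp ((shiftFun (TreeE η κ) lam)^[n] f) 2) :
    f (Sum.inl ⟨0, zero_le⟩) = 0 := by
  rw [memℓp_two_iff] at hf
  by_contra hf0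
  apply hf
  rw [tsum_sum_type]
  refine top_unique ?_
  refine le_trans ?_ (self_le_add_left _ _)
  rw [tsum_branchV]
  have hval : ∀ i : JIdx η,
      ((‖(shiftFun (TreeE η κ) lam)^[n] f (Sum.inr ⟨(i.1, n), i.2.1, i.2.2, hn⟩)‖₊ : ℝ≥0∞)) ^ 2
      = ((‖∏ t ∈ Finset.Ico 1 (n + 1), lamB (κ := κ) lam i.1 t‖₊ : ℝ≥0∞)) ^ 2 *
        ((‖f (Sum.inl ⟨0, zero_le⟩)‖₊ : ℝ≥0∞)) ^ 2 := by
    intro i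
    rw [iter_inr_ge n f i.1 n ⟨i.2.1, i.2.2, hn⟩ (le_refl n)]
    have h0 : ((n - n : ℕ) : ℕ∞) ≤ κ := by rw [Nat.sub_self]; exact zero_le
    rw [dif_pos h0]
    have he : (Sum.inl ⟨n - n, h0⟩ : TreeV η κ) = Sum.inl ⟨0, zero_le⟩ :=
      congrArg Sum.inl (Subtype.ext (Nat.sub_self n))
    have hp : (∏ t ∈ Finset.Ico 0 (n - n), lamT (η := η) lam t) = 1 := by
      rw [Nat.sub_self, Finset.Ico_self, Finset.prod_empty]
    rw [he, hp, one_mul, nnnorm_mul, ENNReal.coe_mul, mul_pow]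
  calc (⊤ : ℝ≥0∞) = (∑' i : JIdx η,
        ((‖∏ t ∈ Finset.Ico 1 (n + 1), lamB (κ := κ) lam i.1 t‖₊ : ℝ≥0∞)) ^ 2) *
        ((‖f (Sum.inl ⟨0, zero_le⟩)‖₊ : ℝ≥0∞)) ^ 2 := by
        rw [hdiv, ENNReal.top_mul
          (pow_ne_zero 2 (ENNReal.coe_ne_zero.2 (nnnorm_ne_zero_iff.2 hf0)))]
    _ = ∑' i : JIdx η, ((‖∏ t ∈ Finset.Ico 1 (n + 1), lamB (κ := κ) lam i.1 t‖₊ : ℝ≥0∞)) ^ 2 *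
        ((‖f (Sum.inl ⟨0, zero_le⟩)‖₊ : ℝ≥0∞)) ^ 2 := (ENNReal.tsum_mul_right).symm
    _ = ∑' i : JIdx η,
        ((‖(shiftFun (TreeE η κ) lam)^[n] f (Sum.inr ⟨(i.1, n), i.2.1, i.2.2, hn⟩)‖₊ : ℝ≥0∞)) ^ 2 :=
        tsum_congr fun i => (hval i).symm
    _ ≤ ∑' (i : JIdx η) (j : {j : ℕ // 1 ≤ j}),
        ((‖(shiftFun (TreeE η κ) lam)^[n] f
          (Sum.inr ⟨(i.1, j.1), i.2.1, i.2.2, j.2⟩)‖₊ : ℝ≥0∞)) ^ 2 :=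
      ENNReal.tsum_le_tsum fun i =>
        ENNReal.le_tsum (f := fun j : {j : ℕ // 1 ≤ j} =>
          ((‖(shiftFun (TreeE η κ) lam)^[n] f
            (Sum.inr ⟨(i.1, j.1), i.2.1, i.2.2, j.2⟩)‖₊ : ℝ≥0∞)) ^ 2) ⟨n, hn⟩

end Obstruction

section Assemble
variable {η κ : ℕ∞} {lam : TreeV η κ → ℂ}

lemma coe_lp_single {V : Type*} [DecidableEq V] (v : V) (a : ℂ) :
    (⇑(lp.single (E := fun _ : V => ℂ) 2 v a) : V → ℂ) = Pi.single v a := by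
  funext j
  rw [lp.single_apply]

lemma coe_lp_finsum {V : Type*} [DecidableEq V] (F : lp (fun _ : V => ℂ) 2) (t : Finset V) :
    (⇑(∑ v ∈ t, lp.single 2 v (F v)) : V → ℂ) = ∑ v ∈ t, Pi.single (M := fun _ : V => ℂ) v (F v) := by
  classical
  induction t using Finset.induction_on with
  | empty => simp; rfl
  | insert _ _ hvt ih =>
    rw [Finset.sum_insert hvt, Finset.sum_insert hvt, lp.coeFn_add, ih, coe_lp_single]

lemma sum_mem_domPow (n : ℕ)
    (hA : ∀ d : ℕ, 1 ≤ d → d ≤ n →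
      (∑' i : JIdx η, ((‖∏ t ∈ Finset.Ico 1 (d + 1), lamB (κ := κ) lam i.1 t‖₊ : ℝ≥0∞)) ^ 2) ≠ ⊤)
    (t : Finset (TreeV η κ)) (F : TreeV η κ → ℂ) :
    (∑ v ∈ t, Pi.single (M := fun _ : TreeV η κ => ℂ) v (F v)) ∈ domPow (TreeE η κ) lam n := by
  classical
  induction t using Finset.induction_on with
  | empty =>
    intro k hk
    simp only [Finset.sum_empty]
    rw [iter_zero']
    exact zero_memℓp
  | insert _ _ hvt ih =>
    intro k hk
    rw [Finset.sum_insert hvt, iter_add']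
    exact (memℓp_iter_single n hA _ _ k hk).add (ih k hk)

lemma dense_of_fin (n : ℕ)
    (hA : ∀ d : ℕ, 1 ≤ d → d ≤ n →
      (∑' i : JIdx η, ((‖∏ t ∈ Finset.Ico 1 (d + 1), lamB (κ := κ) lam i.1 t‖₊ : ℝ≥0∞)) ^ 2) ≠ ⊤) :
    DenselyDefinedPow (TreeE η κ) lam n := by
  classical
  intro F
  have hs := lp.hasSum_single (show (2 : ℝ≥0∞) ≠ ⊤ by norm_num) F
  refine mem_closure_of_tendsto hs (Filter.Eventually.of_forall fun t => ?_)
  show (⇑(∑ v ∈ t, lp.single 2 v (F v)) : TreeV η κ → ℂ) ∈ domPow (TreeE η κ) lam n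
  rw [coe_lp_finsum]
  exact sum_mem_domPow n hA t F

lemma not_dense_of_div (n : ℕ) (hn : 1 ≤ n)
    (hdiv : (∑' i : JIdx η,
      ((‖∏ t ∈ Finset.Ico 1 (n + 1), lamB (κ := κ) lam i.1 t‖₊ : ℝ≥0∞)) ^ 2) = ⊤) :
    ¬ DenselyDefinedPow (TreeE η κ) lam n := by
  classical
  intro hdense
  set w0 : TreeV η κ := Sum.inl ⟨0, zero_le⟩ with hw0
  set w : lp (fun _ : TreeV η κ => ℂ) 2 := lp.single 2 w0 1 with hw
  obtain ⟨f, hfS, hdist⟩ := hdense.exists_dist_lt w (by norm_num : (0:ℝ) < 1/2)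
  have hf0 : (⇑f : TreeV η κ → ℂ) w0 = 0 :=
    zero_coord_of_mem n hn hdiv _ (hfS n le_rfl)
  have hb := lp.norm_apply_le_norm (two_ne_zero) (f - w) w0
  have hfw : (⇑(f - w) : TreeV η κ → ℂ) w0 = -1 := by
    rw [lp.coeFn_sub, Pi.sub_apply, hf0, hw, coe_lp_single, psme]
    ring
  rw [hfw] at hb
  have h1 : (1 : ℝ) ≤ ‖f - w‖ := by simpa using hb
  have h2 : ‖f - w‖ = dist w f := by rw [dist_eq_norm, ← norm_neg, neg_sub]
  rw [h2] at h1
  linarith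

end Assemble


/-- Theorem (glowne)(b): for a weighted shift on `𝒯_{η,κ}` with nonzero weights admitting
probability measures `{μ_i}_{i ∈ J_η}` satisfying the moment condition and one of the
conditions (i), (ii), (iii), the power `S_λ^n` (`n ≥ 1`) is densely defined iff
`Σ_{i ∈ J_η} |λ_{i,1}|² ∫₀^∞ s^{n-1} dμ_i(s) < ∞`. -/
theorem stmt_1 (η κ : ℕ∞) (hη : 2 ≤ η) (lam : TreeV η κ → ℂ)
    (hlam : ∀ v : TreeV η κ, HasParent (TreeE η κ) v → lam v ≠ 0)
    (μ : ℕ → Measure ℝ≥0)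
    (hμ : ∀ i : ℕ, 1 ≤ i → (i : ℕ∞) ≤ η → IsProbabilityMeasure (μ i))
    (hmom : MomentCond η κ lam μ)
    (hcond : CondI η κ lam μ ∨ CondII η κ lam μ ∨ CondIII η κ lam μ)
    (n : ℕ) (hn : 1 ≤ n) :
    DenselyDefinedPow (TreeE η κ) lam n ↔
      branchSum η κ lam μ (fun s => (s : ℝ≥0∞) ^ (n - 1)) < ⊤ := by
  have hC : branchSum η κ lam μ (fun s => ((s : ℝ≥0∞))⁻¹) ≤ 1 := by
    rcases hcond with ⟨-, h⟩ | ⟨k, -, -, h, -, -⟩ | ⟨-, h, -⟩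
    · exact h
    · exact le_of_eq h
    · exact le_of_eq h
  have hmom' : ∀ m : ℕ, 1 ≤ m → ∀ i : ℕ, 1 ≤ i → (i : ℕ∞) ≤ η →
      ∫⁻ s, (s : ℝ≥0∞) ^ m ∂(μ i) =
        (‖∏ j ∈ Finset.Icc 2 (m + 1), lamB lam i j‖₊ : ℝ≥0∞) ^ 2 := hmom
  constructor
  · intro hdense
    by_contra hdiv
    rw [lt_top_iff_ne_top, not_ne_iff] at hdiv
    exact not_dense_of_div n hn
      (by rw [← branchSum_pow lam μ hμ hmom' n hn]; exact hdiv) hdense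
  · intro hB
    refine dense_of_fin n fun d hd1 hdn => ?_
    rw [← branchSum_pow lam μ hμ hmom' d hd1]
    exact branchSum_fin lam μ hμ n hB.ne hC d hdn
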